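/- arXiv:2501.19357 — 5 statements merged into one kernel-verified Lean document; each statement's English description precedes it below -/
import Mathlib

section
/- If v lies in some minimal fort of a graph G, then v lies in some minimal zero forcing set of G. -/
/-!
A zero forcing set meets every fort: no vertex of a fort disjoint from the initial set can ever be
forced, since its forcing vertex would have that vertex as its unique neighbor in the fort.
Conversely, the vertices that a set `S` never colors form a fort whenever `S` is not zero forcing.
For a minimal fort `W ∋ v`, the never-colored vertices of `insert v Wᶜ` would form a fort inside
`W` missing `v`, so `insert v Wᶜ` is zero forcing. A minimal zero forcing subset of it still meets
`W`, and `v` is its only possible vertex in `W`.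
-/

variable {V : Type*} [Fintype V] [DecidableEq V]

/-- A fort: nonempty set such that no vertex outside has exactly one neighbor inside. -/
def Fort (G : SimpleGraph V) (W : Set V) : Prop :=
  W.Nonempty ∧ ∀ v ∉ W, ¬ ∃! w, w ∈ W ∧ G.Adj v w

/-- A minimal fort contains no fort as a proper subset. -/
def MinimalFort (G : SimpleGraph V) (W : Set V) : Prop :=
  Fort G W ∧ ∀ W', Fort G W' → W' ⊆ W → W' = W

/-- The vertices that eventually get colored blue starting from `S`,
under the zero forcing color change rule. -/
inductive Blue (G : SimpleGraph V) (S : Set V) : V → Prop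
  | init {v : V} (h : v ∈ S) : Blue G S v
  | force {u v : V} (hadj : G.Adj u v) (hu : Blue G S u)
      (h : ∀ w, G.Adj u w → w ≠ v → Blue G S w) : Blue G S v

/-- A zero forcing set colors every vertex blue. -/
def ZeroForcing (G : SimpleGraph V) (S : Set V) : Prop := ∀ v, Blue G S v

def MinimalZeroForcing (G : SimpleGraph V) (S : Set V) : Prop :=
  ZeroForcing G S ∧ ∀ S', ZeroForcing G S' → S' ⊆ S → S' = S

/-- A stalled set: a proper subset of the vertex set from which no color change is possible. -/
def Stalled (G : SimpleGraph V) (S : Set V) : Prop :=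
  S ≠ Set.univ ∧ ∀ u ∈ S, ¬ ∃! w, w ∉ S ∧ G.Adj u w

def MaximalStalled (G : SimpleGraph V) (S : Set V) : Prop :=
  Stalled G S ∧ ∀ S', Stalled G S' → S ⊆ S' → S' = S

def FailedSet (G : SimpleGraph V) (S : Set V) : Prop := ¬ ZeroForcing G S

def MaximalFailed (G : SimpleGraph V) (S : Set V) : Prop :=
  FailedSet G S ∧ ∀ v ∉ S, ZeroForcing G (insert v S)

section

omit [Fintype V] [DecidableEq V]

variable {G : SimpleGraph V} {S W : Set V}

lemma Fort.not_blue_of_disjoint (hW : Fort G W) (hSW : Disjoint S W) {u : V}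
    (hu : Blue G S u) : u ∉ W := by
  induction hu with
  | init hS => exact Set.disjoint_left.1 hSW hS
  | @force x w hadj _ _ hx_notMem hothers_notMem =>
    intro hw
    exact hW.2 x hx_notMem ⟨w, ⟨hw, hadj⟩, fun w' ⟨hw', hadj'⟩ =>
      of_not_not fun hne => hothers_notMem w' hadj' hne hw'⟩

lemma ZeroForcing.inter_nonempty_of_fort (hS : ZeroForcing G S) (hW : Fort G W) :
    (S ∩ W).Nonempty := by
  rw [← Set.not_disjoint_iff_nonempty_inter]
  intro hSW
  obtain ⟨w, hw⟩ := hW.1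
  exact hW.not_blue_of_disjoint hSW (hS w) hw

lemma fort_setOf_not_blue (hS : ¬ ZeroForcing G S) : Fort G {x | ¬ Blue G S x} := by
  obtain ⟨u, hu⟩ := not_forall.1 hS
  refine ⟨⟨u, hu⟩, fun x hx ⟨w, ⟨hw, hadj⟩, huniq⟩ => hw ?_⟩
  exact Blue.force hadj (not_not.1 hx) fun w' hadj' hne =>
    of_not_not fun hw' => hne (huniq w' ⟨hw', hadj'⟩)

lemma MinimalFort.zeroForcing_insert_compl (hW : MinimalFort G W) {v : V} (hv : v ∈ W) :
    ZeroForcing G (insert v Wᶜ) := by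
  by_contra hS
  have hsub : {x | ¬ Blue G (insert v Wᶜ) x} ⊆ W := fun x hx => by
    by_contra hxW
    exact hx (Blue.init (Or.inr hxW))
  have hv_notBlue : v ∈ {x | ¬ Blue G (insert v Wᶜ) x} :=
    (hW.2 _ (fort_setOf_not_blue hS) hsub).symm ▸ hv
  exact hv_notBlue (Blue.init (Or.inl rfl))

lemma minimalZeroForcing_iff : MinimalZeroForcing G S ↔ Minimal (ZeroForcing G) S := by
  simp only [MinimalZeroForcing, minimal_iff, eq_comm]

lemma ZeroForcing.exists_minimalZeroForcing_subset [Finite V] (hS : ZeroForcing G S) :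
    ∃ T ⊆ S, MinimalZeroForcing G T := by
  obtain ⟨T, hTS, hT⟩ := exists_minimal_le_of_wellFoundedLT (ZeroForcing G) S hS
  exact ⟨T, hTS, minimalZeroForcing_iff.2 hT⟩

end

theorem mem_minimalFort_imp_mem_minimalZeroForcing (G : SimpleGraph V) (v : V)
    (h : ∃ W, MinimalFort G W ∧ v ∈ W) :
    ∃ S, MinimalZeroForcing G S ∧ v ∈ S := by
  obtain ⟨W, hW, hvW⟩ := h
  obtain ⟨T, hTS, hT⟩ := (hW.zeroForcing_insert_compl hvW).exists_minimalZeroForcing_subset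
  obtain ⟨w, hwT, hwW⟩ := hT.1.inter_nonempty_of_fort hW.1
  have hwv : w = v := by simpa [hwW] using hTS hwT
  exact ⟨T, hT, hwv ▸ hwT⟩
end

section
/- Let T be a tree with at least one vertex of degree ≥ 3, and let L_1, L_2 be two pendent paths attached to the same high-degree vertex v. The white vertices of the standard coloring of T on L_1 and L_2 (standard path coloring on L_1 and L_2 starting from the vertices adjacent to v, all other vertices blue) form a minimal fort of T. -/
variable {V : Type*} [Fintype V] [DecidableEq V]

/-- A pendent path from `v`: vertices `x 0, ..., x (m-1)` forming a path starting at a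
neighbor of `v`, ending at a leaf, all of whose other vertices have degree 2. -/
def PendentPath (T : SimpleGraph V) (v : V) (m : ℕ) (x : Fin m → V) : Prop :=
  Function.Injective x ∧ (∀ i, x i ≠ v) ∧
  (∀ h : 0 < m, T.Adj v (x ⟨0, h⟩)) ∧
  (∀ (i : ℕ) (h : i + 1 < m), T.Adj (x ⟨i, Nat.lt_of_succ_lt h⟩) (x ⟨i + 1, h⟩)) ∧
  (∀ h : 0 < m, (T.neighborSet (x ⟨m - 1, Nat.sub_lt h one_pos⟩)).ncard = 1) ∧
  (∀ (i : ℕ) (h : i + 1 < m), (T.neighborSet (x ⟨i, Nat.lt_of_succ_lt h⟩)).ncard = 2)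

/-!
Let `W` be the white set. Outside `W`, the vertex `v` sees the first vertex of both legs and each
inner blue vertex sees its two path neighbours, all white; any other vertex sees nothing of `W`,
so `W` is a fort. Conversely, in a fort `W' ⊆ W` a vertex outside `W'` whose `W`-neighbours are
exactly `a, b` forces `a ∈ W' ↔ b ∈ W'`. Along a leg the blue vertices link consecutive white
ones, the leaf of an even leg is linked to its neighbour, and `v` links the two legs, so `W'` is
all of `W` as soon as it is nonempty.
-/
theorem Set.eq_pair_of_ncard_eq_two {α : Type*} {s : Set α} {a b : α} (h : s.ncard = 2)
    (ha : a ∈ s) (hb : b ∈ s) (hab : a ≠ b) : s = {a, b} :=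
  (Set.eq_of_subset_of_ncard_le (Set.pair_subset ha hb) (by rw [h, Set.ncard_pair hab])
    (Set.finite_of_ncard_ne_zero (by omega))).symm

theorem Set.eq_singleton_of_ncard_eq_one {α : Type*} {s : Set α} {a : α} (h : s.ncard = 1)
    (ha : a ∈ s) : s = {a} :=
  (Set.eq_of_subset_of_ncard_le (Set.singleton_subset_iff.2 ha)
    (by rw [h, Set.ncard_singleton]) (Set.finite_of_ncard_ne_zero (by omega))).symm

namespace Fort

variable {V : Type*} {G : SimpleGraph V} {W : Set V} {u a b : V}

theorem notMem_of_forall_adj_eq (hW : Fort G W) (hu : u ∉ W) (ha : G.Adj u a)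
    (h : ∀ w ∈ W, G.Adj u w → w = a) : a ∉ W :=
  fun haW => hW.2 u hu ⟨a, ⟨haW, ha⟩, fun w hw => h w hw.1 hw.2⟩

theorem mem_iff_of_forall_adj_eq_or_eq (hW : Fort G W) (hu : u ∉ W) (ha : G.Adj u a)
    (hb : G.Adj u b) (h : ∀ w ∈ W, G.Adj u w → w = a ∨ w = b) : a ∈ W ↔ b ∈ W := by
  constructor
  · intro haW
    by_contra hbW
    refine hW.notMem_of_forall_adj_eq hu ha (fun w hw hadj => ?_) haW
    exact (h w hw hadj).resolve_right (by rintro rfl; exact hbW hw)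
  · intro hbW
    by_contra haW
    refine hW.notMem_of_forall_adj_eq hu hb (fun w hw hadj => ?_) hbW
    exact (h w hw hadj).resolve_left (by rintro rfl; exact haW hw)

end Fort

/-- `PendentPath` re-indexed by `ℕ`, so that index arithmetic is plain `omega`. -/
structure PendentPathSeq {V : Type*} (T : SimpleGraph V) (v : V) (m : ℕ) (y : ℕ → V) :
    Prop where
  pos : 0 < m
  injOn : Set.InjOn y (Set.Iio m)
  ne_v : ∀ i < m, y i ≠ v
  adj_zero : T.Adj v (y 0)
  adj_succ : ∀ i, i + 1 < m → T.Adj (y i) (y (i + 1))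
  ncard_last : (T.neighborSet (y (m - 1))).ncard = 1
  ncard_of_succ_lt : ∀ i, i + 1 < m → (T.neighborSet (y i)).ncard = 2

/-- Indices are `0`-based: `y i` is the paper's `v_(i+1)`, blue iff `i` is odd and `y i` is not
the leaf. -/
def standardWhite {V : Type*} (m : ℕ) (y : ℕ → V) : Set V :=
  {w | ∃ i < m, w = y i ∧ ¬(i % 2 = 1 ∧ i + 1 < m)}

theorem mem_standardWhite {V : Type*} {m i : ℕ} {y : ℕ → V} (hi : i < m)
    (hwhite : ¬(i % 2 = 1 ∧ i + 1 < m)) : y i ∈ standardWhite m y :=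
  ⟨i, hi, rfl, hwhite⟩

theorem Fin.extend_val_apply {V : Type*} {m : ℕ} (x : Fin m → V) (e : ℕ → V) {i : ℕ}
    (hi : i < m) :
    Function.extend Fin.val x e i = x ⟨i, hi⟩ :=
  Fin.val_injective.extend_apply x e ⟨i, hi⟩

theorem PendentPath.pendentPathSeq {V : Type*} {T : SimpleGraph V} {v : V} {m : ℕ}
    {x : Fin m → V} (h : PendentPath T v m x) (hm : 0 < m) :
    PendentPathSeq T v m (Function.extend Fin.val x fun _ => v) := by
  obtain ⟨hinj, hne, hadj₀, hadj, hlast, hmid⟩ := h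
  refine ⟨hm, fun i hi j hj he => ?_, fun i hi => ?_, ?_, fun i hi => ?_, ?_, fun i hi => ?_⟩
  · rw [Fin.extend_val_apply x _ hi, Fin.extend_val_apply x _ hj] at he
    exact congrArg Fin.val (hinj he)
  · rw [Fin.extend_val_apply x _ hi]; exact hne _
  · rw [Fin.extend_val_apply x _ hm]; exact hadj₀ hm
  · rw [Fin.extend_val_apply x _ (Nat.lt_of_succ_lt hi), Fin.extend_val_apply x _ hi]
    exact hadj i hi
  · rw [Fin.extend_val_apply x _ (Nat.sub_lt hm one_pos)]; exact hlast hm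
  · rw [Fin.extend_val_apply x _ (Nat.lt_of_succ_lt hi)]; exact hmid i hi

theorem setOf_eq_standardWhite {V : Type*} {m : ℕ} (x : Fin m → V) (e : ℕ → V) :
    {w | ∃ i : Fin m, w = x i ∧ ¬(i.val % 2 = 1 ∧ i.val + 1 < m)} =
      standardWhite m (Function.extend Fin.val x e) := by
  ext w
  constructor
  · rintro ⟨i, rfl, hi⟩
    exact ⟨i, i.isLt, (Fin.extend_val_apply x e i.isLt).symm, hi⟩
  · rintro ⟨i, hi, rfl, hwhite⟩
    exact ⟨⟨i, hi⟩, Fin.extend_val_apply x e hi, hwhite⟩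

namespace PendentPathSeq

variable {V : Type*} {T : SimpleGraph V} {v : V} {m : ℕ} {y : ℕ → V} {W : Set V} {i j : ℕ}

theorem adj_pred (pp : PendentPathSeq T v m y) (h0 : 0 < i) (hi : i < m) :
    T.Adj (y i) (y (i - 1)) := by
  have h := pp.adj_succ (i - 1) (by omega)
  rw [Nat.sub_add_cancel h0] at h
  exact h.symm

theorem adj_iff (pp : PendentPathSeq T v m y) (hi : i < m) (u : V) :
    T.Adj (y i) u ↔ (i = 0 ∧ u = v) ∨ (0 < i ∧ u = y (i - 1)) ∨ (i + 1 < m ∧ u = y (i + 1)) := by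
  obtain ⟨p, hp, hp_ne, hprev⟩ : ∃ p, T.Adj (y i) p ∧ (i + 1 < m → p ≠ y (i + 1)) ∧
      ∀ u, ((i = 0 ∧ u = v) ∨ (0 < i ∧ u = y (i - 1)) ↔ u = p) := by
    rcases Nat.eq_zero_or_pos i with rfl | h0
    · exact ⟨v, pp.adj_zero.symm, fun h1 => (pp.ne_v 1 h1).symm, fun u => by simp⟩
    · refine ⟨y (i - 1), pp.adj_pred h0 hi, fun h1 he => ?_, fun u => by simp [h0, h0.ne']⟩
      have := pp.injOn (show i - 1 < m by omega) h1 he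
      omega
  rw [← or_assoc, hprev, ← SimpleGraph.mem_neighborSet]
  rcases lt_or_ge (i + 1) m with hlt | hge
  · rw [Set.eq_pair_of_ncard_eq_two (pp.ncard_of_succ_lt i hlt) hp (pp.adj_succ i hlt)
      (hp_ne hlt)]
    simp [hlt]
  · have hlast : m - 1 = i := by omega
    have hleaf : (T.neighborSet (y i)).ncard = 1 := hlast ▸ pp.ncard_last
    rw [Set.eq_singleton_of_ncard_eq_one hleaf hp]
    simp [show ¬i + 1 < m by omega]

theorem v_notMem_standardWhite (pp : PendentPathSeq T v m y) : v ∉ standardWhite m y :=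
  fun ⟨j, hj, he, _⟩ => pp.ne_v j hj he.symm

theorem notMem_standardWhite (pp : PendentPathSeq T v m y) (hodd : i % 2 = 1)
    (hlt : i + 1 < m) : y i ∉ standardWhite m y := by
  rintro ⟨j, hj, he, hwhite⟩
  have := pp.injOn (show i < m by omega) hj he
  omega

theorem eq_zero_of_adj (pp : PendentPathSeq T v m y) (hj : j < m) (h : T.Adj v (y j)) :
    j = 0 := by
  rcases (pp.adj_iff hj v).1 h.symm with ⟨h0, -⟩ | ⟨-, he⟩ | ⟨hlt, he⟩
  · exact h0
  · exact absurd he.symm (pp.ne_v _ (by omega))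
  · exact absurd he.symm (pp.ne_v _ hlt)

theorem not_existsUnique_adj (pp : PendentPathSeq T v m y) (hsub : standardWhite m y ⊆ W)
    {u : V} (hj : j < m) (hadj : T.Adj (y j) u) (hu : u ∉ W) (huv : u ≠ v) :
    ¬∃! w, w ∈ W ∧ T.Adj u w := by
  obtain ⟨i, hi, rfl⟩ : ∃ i < m, u = y i := by
    rcases (pp.adj_iff hj u).1 hadj with ⟨-, rfl⟩ | ⟨-, rfl⟩ | ⟨hlt, rfl⟩
    · exact absurd rfl huv
    · exact ⟨j - 1, by omega, rfl⟩
    · exact ⟨j + 1, hlt, rfl⟩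
  have hblue : i % 2 = 1 ∧ i + 1 < m := by
    by_contra hwhite
    exact hu (hsub (mem_standardWhite hi hwhite))
  intro huniq
  have hpred : y (i - 1) ∈ W := hsub (mem_standardWhite (by omega) (by omega))
  have hsucc : y (i + 1) ∈ W := hsub (mem_standardWhite hblue.2 (by omega))
  have := pp.injOn (show i - 1 < m by omega) hblue.2
    (huniq.unique ⟨hpred, pp.adj_pred (by omega) hi⟩ ⟨hsucc, pp.adj_succ i hblue.2⟩)
  omega

theorem mem_pred_iff_mem_succ (pp : PendentPathSeq T v m y) (hW : Fort T W) (h0 : 0 < i)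
    (hlt : i + 1 < m) (hi : y i ∉ W) : y (i - 1) ∈ W ↔ y (i + 1) ∈ W :=
  hW.mem_iff_of_forall_adj_eq_or_eq hi (pp.adj_pred h0 (by omega)) (pp.adj_succ i hlt)
    fun w _ hadj => by
      rcases (pp.adj_iff (by omega) w).1 hadj with ⟨h, -⟩ | ⟨-, rfl⟩ | ⟨-, rfl⟩
      · omega
      · exact .inl rfl
      · exact .inr rfl

theorem mem_iff_mem_leaf (pp : PendentPathSeq T v m y) (hW : Fort T W) (hv : v ∉ W)
    (hm : i + 2 = m) (hpred : 0 < i → y (i - 1) ∉ W) : y i ∈ W ↔ y (i + 1) ∈ W := by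
  constructor
  · intro hi
    by_contra hleaf
    refine hW.notMem_of_forall_adj_eq hleaf (pp.adj_succ i (by omega)).symm ?_ hi
    intro w _ hadj
    rcases (pp.adj_iff (show i + 1 < m by omega) w).1 hadj with ⟨h, -⟩ | ⟨-, rfl⟩ | ⟨h, -⟩
    · omega
    · simp
    · omega
  · intro hleaf
    by_contra hi
    refine hW.notMem_of_forall_adj_eq hi (pp.adj_succ i (by omega)) ?_ hleaf
    intro w hw hadj
    rcases (pp.adj_iff (show i < m by omega) w).1 hadj with ⟨-, rfl⟩ | ⟨h0, rfl⟩ | ⟨-, rfl⟩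
    · exact absurd hw hv
    · exact absurd hw (hpred h0)
    · rfl

theorem mem_iff_mem_zero (pp : PendentPathSeq T v m y) (hW : Fort T W) (hv : v ∉ W)
    (hblue : ∀ i, i % 2 = 1 → i + 1 < m → y i ∉ W) (hi : i < m)
    (hwhite : ¬(i % 2 = 1 ∧ i + 1 < m)) : y i ∈ W ↔ y 0 ∈ W := by
  induction i using Nat.strong_induction_on with
  | _ i ih =>
  rcases Nat.eq_zero_or_pos i with rfl | h0
  · rfl
  by_cases heven : i % 2 = 0
  · have hlink := pp.mem_pred_iff_mem_succ hW (i := i - 1) (by omega) (by omega)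
      (hblue (i - 1) (by omega) (by omega))
    rw [Nat.sub_add_cancel h0, show i - 1 - 1 = i - 2 by omega] at hlink
    rw [← hlink]
    exact ih (i - 2) (by omega) (by omega) (by omega)
  · have hlink := pp.mem_iff_mem_leaf hW hv (i := i - 1) (by omega)
      fun _ => hblue _ (by omega) (by omega)
    rw [Nat.sub_add_cancel h0] at hlink
    rw [← hlink]
    exact ih (i - 1) (by omega) (by omega) (by omega)

end PendentPathSeq

section TwoLegs

variable {V : Type*} {T : SimpleGraph V} {v : V} {m₁ m₂ : ℕ} {y₁ y₂ : ℕ → V} {W : Set V}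

theorem fort_standardWhite_union (pp₁ : PendentPathSeq T v m₁ y₁)
    (pp₂ : PendentPathSeq T v m₂ y₂) (hd : ∀ i < m₁, ∀ j < m₂, y₁ i ≠ y₂ j) :
    Fort T (standardWhite m₁ y₁ ∪ standardWhite m₂ y₂) := by
  have h₁ : y₁ 0 ∈ standardWhite m₁ y₁ ∪ standardWhite m₂ y₂ :=
    .inl (mem_standardWhite pp₁.pos (by omega))
  have h₂ : y₂ 0 ∈ standardWhite m₁ y₁ ∪ standardWhite m₂ y₂ :=
    .inr (mem_standardWhite pp₂.pos (by omega))
  refine ⟨⟨_, h₁⟩, fun u hu huniq => ?_⟩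
  by_cases huv : u = v
  · subst huv
    exact hd 0 pp₁.pos 0 pp₂.pos (huniq.unique ⟨h₁, pp₁.adj_zero⟩ ⟨h₂, pp₂.adj_zero⟩)
  obtain ⟨w, (⟨j, hj, rfl, -⟩ | ⟨j, hj, rfl, -⟩), hadj⟩ := huniq.exists
  · exact pp₁.not_existsUnique_adj Set.subset_union_left hj hadj.symm hu huv huniq
  · exact pp₂.not_existsUnique_adj Set.subset_union_right hj hadj.symm hu huv huniq

theorem mem_iff_mem_zero_of_subset_union (pp₁ : PendentPathSeq T v m₁ y₁)
    (hd : ∀ i < m₁, ∀ j < m₂, y₁ i ≠ y₂ j) (hW : Fort T W)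
    (hsub : W ⊆ standardWhite m₁ y₁ ∪ standardWhite m₂ y₂) (hv : v ∉ W) :
    ∀ i < m₁, ¬(i % 2 = 1 ∧ i + 1 < m₁) → (y₁ i ∈ W ↔ y₁ 0 ∈ W) := by
  intro i hi hwhite
  refine pp₁.mem_iff_mem_zero hW hv (fun k hodd hlt hk => ?_) hi hwhite
  rcases hsub hk with hk₁ | ⟨j, hj, he, -⟩
  · exact pp₁.notMem_standardWhite hodd hlt hk₁
  · exact hd k (by omega) j hj he

theorem standardWhite_union_subset (pp₁ : PendentPathSeq T v m₁ y₁)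
    (pp₂ : PendentPathSeq T v m₂ y₂) (hd : ∀ i < m₁, ∀ j < m₂, y₁ i ≠ y₂ j) (hW : Fort T W)
    (hsub : W ⊆ standardWhite m₁ y₁ ∪ standardWhite m₂ y₂) :
    standardWhite m₁ y₁ ∪ standardWhite m₂ y₂ ⊆ W := by
  have hv : v ∉ W := fun h =>
    (hsub h).elim pp₁.v_notMem_standardWhite pp₂.v_notMem_standardWhite
  have leg₁ := mem_iff_mem_zero_of_subset_union pp₁ hd hW hsub hv
  have leg₂ := mem_iff_mem_zero_of_subset_union pp₂ (fun j hj i hi => (hd i hi j hj).symm) hW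
    (Set.union_comm (standardWhite m₁ y₁) _ ▸ hsub) hv
  have center : y₁ 0 ∈ W ↔ y₂ 0 ∈ W :=
    hW.mem_iff_of_forall_adj_eq_or_eq hv pp₁.adj_zero pp₂.adj_zero fun w hw hadj => by
      rcases hsub hw with ⟨j, hj, rfl, -⟩ | ⟨j, hj, rfl, -⟩
      · exact .inl (by rw [pp₁.eq_zero_of_adj hj hadj])
      · exact .inr (by rw [pp₂.eq_zero_of_adj hj hadj])
  obtain ⟨w, hw⟩ := hW.1
  have h₁ : y₁ 0 ∈ W := by
    rcases hsub hw with ⟨i, hi, rfl, hwhite⟩ | ⟨i, hi, rfl, hwhite⟩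
    · exact (leg₁ i hi hwhite).1 hw
    · exact center.2 ((leg₂ i hi hwhite).1 hw)
  rintro _ (⟨i, hi, rfl, hwhite⟩ | ⟨i, hi, rfl, hwhite⟩)
  · exact (leg₁ i hi hwhite).2 h₁
  · exact (leg₂ i hi hwhite).2 (center.1 h₁)

theorem minimalFort_standardWhite_union (pp₁ : PendentPathSeq T v m₁ y₁)
    (pp₂ : PendentPathSeq T v m₂ y₂) (hd : ∀ i < m₁, ∀ j < m₂, y₁ i ≠ y₂ j) :
    MinimalFort T (standardWhite m₁ y₁ ∪ standardWhite m₂ y₂) :=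
  ⟨fort_standardWhite_union pp₁ pp₂ hd, fun _ hW hsub =>
    hsub.antisymm (standardWhite_union_subset pp₁ pp₂ hd hW hsub)⟩

end TwoLegs

theorem standard_coloring_two_legs_minimalFort_general (T : SimpleGraph V) (v : V)
    (m₁ m₂ : ℕ) (hm₁ : 1 ≤ m₁) (hm₂ : 1 ≤ m₂)
    (x₁ : Fin m₁ → V) (x₂ : Fin m₂ → V)
    (h₁ : PendentPath T v m₁ x₁) (h₂ : PendentPath T v m₂ x₂)
    (hdisj : ∀ i j, x₁ i ≠ x₂ j) :
    MinimalFort T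
      ({w | ∃ i : Fin m₁, w = x₁ i ∧ ¬ (i.val % 2 = 1 ∧ i.val + 1 < m₁)} ∪
       {w | ∃ i : Fin m₂, w = x₂ i ∧ ¬ (i.val % 2 = 1 ∧ i.val + 1 < m₂)}) := by
  rw [setOf_eq_standardWhite x₁ fun _ => v, setOf_eq_standardWhite x₂ fun _ => v]
  refine minimalFort_standardWhite_union (h₁.pendentPathSeq hm₁) (h₂.pendentPathSeq hm₂)
    fun i hi j hj => ?_
  rw [Fin.extend_val_apply x₁ _ hi, Fin.extend_val_apply x₂ _ hj]
  exact hdisj _ _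

theorem standard_coloring_two_legs_minimalFort (T : SimpleGraph V) (hT : T.IsTree) (v : V)
    (hv : 3 ≤ (T.neighborSet v).ncard)
    (m₁ m₂ : ℕ) (hm₁ : 1 ≤ m₁) (hm₂ : 1 ≤ m₂)
    (x₁ : Fin m₁ → V) (x₂ : Fin m₂ → V)
    (h₁ : PendentPath T v m₁ x₁) (h₂ : PendentPath T v m₂ x₂)
    (hdisj : ∀ i j, x₁ i ≠ x₂ j) :
    MinimalFort T
      ({w | ∃ i : Fin m₁, w = x₁ i ∧ ¬ (i.val % 2 = 1 ∧ i.val + 1 < m₁)} ∪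
       {w | ∃ i : Fin m₂, w = x₂ i ∧ ¬ (i.val % 2 = 1 ∧ i.val + 1 < m₂)}) :=
  standard_coloring_two_legs_minimalFort_general T v m₁ m₂ hm₁ hm₂ x₁ x₂ h₁ h₂ hdisj
end

section
/- Let W be a fort of a tree T with |V(T)| ≥ 2 and let w ∈ W. Then there exists a path P in T from a leaf x_1 to a distinct leaf x_2 passing through w such that x_1, x_2 ∈ W, and every vertex of P not in W has both of its neighbors on P in W. -/
variable {V : Type*} [Fintype V] [DecidableEq V]

/-!
Grow a path greedily at a start vertex `s ∈ W`. If `s` is not a leaf it has a neighbour `u` off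
the path, since in a forest only one neighbour of `s` can lie on a path starting at `s`. Prepend
`u` if `u ∈ W`; otherwise the fort condition gives a second neighbour `u' ∈ W` of `u`, off the path
by the same acyclicity argument, and we prepend `u'` and `u`. The new start lies in `W` and every
new vertex outside `W` sits between two vertices of `W`, so the growth can only stop at a leaf
in `W`. Growing once from an edge at `w`, and then from `w` at the other end of the resulting
path, gives the two leaves.
-/

open SimpleGraph

variable {α : Type*}

def IsFlanked (W : Set α) (l : List α) : Prop :=
  ∀ a b c : α, [a, b, c] <:+: l → b ∉ W → a ∈ W ∧ c ∈ W

namespace IsFlanked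

variable {W : Set α}

lemma singleton (a : α) : IsFlanked W [a] := fun _ _ _ h => by
  simpa using h.sublist.length_le

lemma reverse {l : List α} (h : IsFlanked W l) : IsFlanked W l.reverse := by
  intro a b c habc hb
  have hcba : [c, b, a] <:+: l := List.reverse_infix.mp (by simpa using habc)
  exact (h c b a hcba hb).symm

lemma cons_cons {a b : α} {l : List α} (h : IsFlanked W (b :: l)) (hb : b ∈ W) :
    IsFlanked W (a :: b :: l) := by
  intro x y z hxyz hy
  rcases List.infix_cons_iff.mp hxyz with hpre | hinf
  · simp only [List.cons_prefix_cons] at hpre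
    exact absurd (hpre.2.1 ▸ hb) hy
  · exact h x y z hinf hy

lemma cons_cons_cons {a b c : α} {l : List α} (h : IsFlanked W (b :: c :: l)) (ha : a ∈ W)
    (hc : c ∈ W) : IsFlanked W (a :: b :: c :: l) := by
  intro x y z hxyz hy
  rcases List.infix_cons_iff.mp hxyz with hpre | hinf
  · simp only [List.cons_prefix_cons] at hpre
    exact ⟨hpre.1 ▸ ha, hpre.2.2.1 ▸ hc⟩
  · exact h x y z hinf hy

end IsFlanked

variable {G : SimpleGraph α} {W : Set α}

lemma Fort.exists_adj_ne (hW : Fort G W) {u v : α} (hu : u ∉ W) (hv : v ∈ W) (huv : G.Adj u v) :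
    ∃ u' ∈ W, G.Adj u u' ∧ u' ≠ v := by
  by_contra! h
  exact hW.2 u hu ⟨v, ⟨hv, huv⟩, fun u' hu' => h u' hu'.1 hu'.2⟩

theorem exists_longer_flanked_path (hG : G.IsAcyclic) (hW : Fort G W) {v y u : α}
    {P : G.Walk v y} (hP : P.IsPath) (hv : v ∈ W) (hPW : IsFlanked W P.support)
    (hvu : G.Adj v u) (hu : u ∉ P.support) :
    ∃ (s : α) (Q : G.Walk s y), Q.IsPath ∧ s ∈ W ∧ s ≠ y ∧ IsFlanked W Q.support ∧
      P.support <:+ Q.support ∧ P.length < Q.length := by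
  have hPW : IsFlanked W (v :: P.support.tail) := P.cons_tail_support ▸ hPW
  have huP : (Walk.cons hvu.symm P).IsPath := hP.cons hu
  by_cases huW : u ∈ W
  · refine ⟨u, Walk.cons hvu.symm P, huP, huW, by rintro rfl; exact hu P.end_mem_support,
      ?_, ?_, ?_⟩
    · rw [Walk.support_cons, ← P.cons_tail_support]
      exact hPW.cons_cons hv
    · simp
    · simp
  · obtain ⟨u', hu'W, huu', hu'v⟩ := hW.exists_adj_ne huW hv hvu.symm
    have hu' : u' ∉ (Walk.cons hvu.symm P).support := fun h =>
      hu'v (by simpa using hG.eq_snd_of_adj_start huP huu' h)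
    refine ⟨u', Walk.cons huu'.symm (Walk.cons hvu.symm P), huP.cons hu', hu'W,
      by rintro rfl; exact hu' (Walk.end_mem_support _), ?_, ?_, ?_⟩
    · rw [Walk.support_cons, Walk.support_cons, ← P.cons_tail_support]
      exact (hPW.cons_cons hv).cons_cons_cons hu'W hv
    · simp [(List.suffix_cons _ _).trans (List.suffix_cons _ _)]
    · simp

theorem exists_leaf_flanked_path_extending [Fintype α] (hG : G.IsAcyclic) (hW : Fort G W)
    {v y : α} (P : G.Walk v y) (hP : P.IsPath) (hv : v ∈ W) (hvy : v ≠ y)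
    (hPW : IsFlanked W P.support) :
    ∃ (x : α) (Q : G.Walk x y), Q.IsPath ∧ x ∈ W ∧ x ≠ y ∧ (G.neighborSet x).ncard = 1 ∧
      IsFlanked W Q.support ∧ P.support <:+ Q.support := by
  by_cases hleaf : (G.neighborSet v).ncard = 1
  · exact ⟨v, P, hP, hv, hvy, hleaf, hPW, List.suffix_refl _⟩
  obtain ⟨u, hvu, hu⟩ : ∃ u, G.Adj v u ∧ u ≠ P.snd := by
    by_contra! h
    exact hleaf (Set.ncard_eq_one.mpr ⟨P.snd, Set.eq_singleton_iff_unique_mem.mpr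
      ⟨P.adj_snd (P.not_nil_of_ne hvy), h⟩⟩)
  obtain ⟨s, Q, hQ, hs, hsy, hQW, hPQ, hlen⟩ := exists_longer_flanked_path hG hW hP hv hPW hvu
    fun h => hu (hG.eq_snd_of_adj_start hP hvu h)
  obtain ⟨x, R, hR, hx, hxy, hleaf, hRW, hQR⟩ :=
    exists_leaf_flanked_path_extending hG hW Q hQ hs hsy hQW
  exact ⟨x, R, hR, hx, hxy, hleaf, hRW, hPQ.trans hQR⟩
termination_by Fintype.card α - P.length
decreasing_by have := hQ.length_lt; omega

theorem fort_leaf_to_leaf_path (T : SimpleGraph V) (hT : T.IsTree)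
    (hcard : 2 ≤ Fintype.card V) (W : Set V) (hW : Fort T W) (w : V) (hw : w ∈ W) :
    ∃ (x₁ x₂ : V) (P : T.Walk x₁ x₂), P.IsPath ∧ w ∈ P.support ∧ x₁ ≠ x₂ ∧
      x₁ ∈ W ∧ x₂ ∈ W ∧
      (T.neighborSet x₁).ncard = 1 ∧ (T.neighborSet x₂).ncard = 1 ∧
      ∀ a b c : V, [a, b, c] <:+: P.support → b ∉ W → a ∈ W ∧ c ∈ W := by
  have : Nontrivial V := Fintype.one_lt_card_iff_nontrivial.mp hcard
  obtain ⟨u, hwu⟩ := hT.connected.preconnected.exists_adj_of_nontrivial w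
  obtain ⟨s, P, hP, hs, hsw, hPW, -⟩ := exists_longer_flanked_path hT.isAcyclic hW
    Walk.IsPath.nil hw (IsFlanked.singleton w) hwu (by simpa using hwu.ne')
  obtain ⟨x₁, Q, hQ, hx₁, hx₁w, hleaf₁, hQW, -⟩ :=
    exists_leaf_flanked_path_extending hT.isAcyclic hW P hP hs hsw hPW
  obtain ⟨x₂, R, hR, hx₂, hx₂x₁, hleaf₂, hRW, hQR⟩ :=
    exists_leaf_flanked_path_extending hT.isAcyclic hW Q.reverse hQ.reverse hw hx₁w.symm
      (by simpa using hQW.reverse)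
  exact ⟨x₂, x₁, R, hR, hQR.subset Q.reverse.start_mem_support, hx₂x₁, hx₂, hx₁, hleaf₂, hleaf₁,
    hRW⟩
end

section
/- Every complete bipartite graph K_{m,n} with m, n ≥ 2 is well-failed: every minimal fort consists of exactly two vertices lying in the same partite set. -/
variable {V : Type*} [Fintype V] [DecidableEq V]

/-! Two vertices with the same neighbourhood always form a fort, and any two vertices on the
same side of `K_{m,n}` have the same neighbourhood; so by minimality a minimal fort containing two
vertices on one side is exactly that pair. It remains to see that a fort cannot have at most one
vertex on each side: if it contained a left vertex `x`, then some right vertex outside it (the right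
side has at least two vertices) would have `x` as its only neighbour in the fort, and symmetrically
on the right; so it would be empty. -/

theorem fort_pair_of_neighborSet_eq {V : Type*} {G : SimpleGraph V} {u v : V} (huv : u ≠ v)
    (h : G.neighborSet u = G.neighborSet v) : Fort G {u, v} := by
  refine ⟨Set.insert_nonempty u {v}, fun w _ ⟨z, ⟨hz, hwz⟩, huniq⟩ => huv ?_⟩
  have hadj : G.Adj w u ↔ G.Adj w v := by
    rw [G.adj_comm w u, G.adj_comm w v, ← G.mem_neighborSet, ← G.mem_neighborSet, h]
  have hwu : G.Adj w u ∧ G.Adj w v := by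
    rcases hz with rfl | rfl
    · exact ⟨hwz, hadj.mp hwz⟩
    · exact ⟨hadj.mpr hwz, hwz⟩
  exact (huniq u ⟨Or.inl rfl, hwu.1⟩).trans (huniq v ⟨Or.inr rfl, hwu.2⟩).symm

theorem Set.Subsingleton.exists_notMem {α : Type*} [Nontrivial α] {s : Set α}
    (hs : s.Subsingleton) : ∃ a, a ∉ s := by
  by_contra! h
  exact not_subsingleton α (Set.subsingleton_univ_iff.mp (Set.eq_univ_of_forall h ▸ hs))

namespace completeBipartiteGraph

variable {α β : Type*}

theorem neighborSet_inl (x : α) :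
    (completeBipartiteGraph α β).neighborSet (Sum.inl x) = Set.range Sum.inr := by
  ext (_ | _) <;> simp

theorem neighborSet_inr (y : β) :
    (completeBipartiteGraph α β).neighborSet (Sum.inr y) = Set.range Sum.inl := by
  ext (_ | _) <;> simp

theorem fort_pair_inl {x x' : α} (h : x ≠ x') :
    Fort (completeBipartiteGraph α β) {Sum.inl x, Sum.inl x'} :=
  fort_pair_of_neighborSet_eq (Sum.inl_injective.ne h) (by rw [neighborSet_inl, neighborSet_inl])

theorem fort_pair_inr {y y' : β} (h : y ≠ y') :
    Fort (completeBipartiteGraph α β) {Sum.inr y, Sum.inr y'} :=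
  fort_pair_of_neighborSet_eq (Sum.inr_injective.ne h) (by rw [neighborSet_inr, neighborSet_inr])

variable {W : Set (α ⊕ β)}

theorem inl_preimage_eq_empty_of_fort [Nontrivial β] (hW : Fort (completeBipartiteGraph α β) W)
    (hL : (Sum.inl ⁻¹' W).Subsingleton) (hR : (Sum.inr ⁻¹' W).Subsingleton) :
    Sum.inl ⁻¹' W = ∅ := by
  refine hL.eq_empty_or_singleton.resolve_right fun ⟨x, hx⟩ => ?_
  obtain ⟨y, hy⟩ := hR.exists_notMem
  refine hW.2 (Sum.inr y) hy ⟨Sum.inl x, ⟨hx.ge rfl, by simp⟩, ?_⟩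
  rintro (x' | y') ⟨hx', hadj⟩
  · rw [show x' = x from hx.le hx']
  · simp at hadj

theorem inr_preimage_eq_empty_of_fort [Nontrivial α] (hW : Fort (completeBipartiteGraph α β) W)
    (hL : (Sum.inl ⁻¹' W).Subsingleton) (hR : (Sum.inr ⁻¹' W).Subsingleton) :
    Sum.inr ⁻¹' W = ∅ := by
  refine hR.eq_empty_or_singleton.resolve_right fun ⟨y, hy⟩ => ?_
  obtain ⟨x, hx⟩ := hL.exists_notMem
  refine hW.2 (Sum.inl x) hx ⟨Sum.inr y, ⟨hy.ge rfl, by simp⟩, ?_⟩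
  rintro (x' | y') ⟨hy', hadj⟩
  · simp at hadj
  · rw [show y' = y from hy.le hy']

theorem preimage_nontrivial_of_fort [Nontrivial α] [Nontrivial β]
    (hW : Fort (completeBipartiteGraph α β) W) :
    (Sum.inl ⁻¹' W).Nontrivial ∨ (Sum.inr ⁻¹' W).Nontrivial := by
  by_contra! ⟨hL, hR⟩
  obtain ⟨(x | y), hw⟩ := hW.1
  · exact (inl_preimage_eq_empty_of_fort hW hL hR).subset (show x ∈ Sum.inl ⁻¹' W from hw)
  · exact (inr_preimage_eq_empty_of_fort hW hL hR).subset (show y ∈ Sum.inr ⁻¹' W from hw)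

theorem eq_pair_of_minimalFort [Nontrivial α] [Nontrivial β]
    (hW : MinimalFort (completeBipartiteGraph α β) W) :
    (∃ x x', x ≠ x' ∧ W = {Sum.inl x, Sum.inl x'}) ∨
      (∃ y y', y ≠ y' ∧ W = {Sum.inr y, Sum.inr y'}) := by
  rcases preimage_nontrivial_of_fort hW.1 with ⟨x, hx, x', hx', hne⟩ | ⟨y, hy, y', hy', hne⟩
  · exact Or.inl ⟨x, x', hne, (hW.2 _ (fort_pair_inl hne) (Set.pair_subset hx hx')).symm⟩
  · exact Or.inr ⟨y, y', hne, (hW.2 _ (fort_pair_inr hne) (Set.pair_subset hy hy')).symm⟩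

end completeBipartiteGraph

theorem completeBipartite_wellFailed (m n : ℕ) (hm : 2 ≤ m) (hn : 2 ≤ n) :
    ∀ W : Set (Fin m ⊕ Fin n), MinimalFort (completeBipartiteGraph (Fin m) (Fin n)) W →
      ∃ a b, a ≠ b ∧ W = {a, b} ∧
        ((∃ x y, a = Sum.inl x ∧ b = Sum.inl y) ∨
         (∃ x y, a = Sum.inr x ∧ b = Sum.inr y)) := by
  have : Nontrivial (Fin m) := Fin.nontrivial_iff_two_le.mpr hm
  have : Nontrivial (Fin n) := Fin.nontrivial_iff_two_le.mpr hn
  intro W hW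
  rcases completeBipartiteGraph.eq_pair_of_minimalFort hW with ⟨x, x', hne, rfl⟩ | ⟨y, y', hne, rfl⟩
  · exact ⟨_, _, Sum.inl_injective.ne hne, rfl, Or.inl ⟨x, x', rfl, rfl⟩⟩
  · exact ⟨_, _, Sum.inr_injective.ne hne, rfl, Or.inr ⟨y, y', rfl, rfl⟩⟩
end

section
/- The Petersen graph is well-failed: every minimal fort of the Petersen graph has exactly four vertices. -/
variable {V : Type*} [Fintype V] [DecidableEq V]

/-- The Petersen graph as the Kneser graph `K(5,2)`: vertices are the 2-element
subsets of a 5-element set, adjacent when disjoint. -/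
def petersen : SimpleGraph {s : Finset (Fin 5) // s.card = 2} where
  Adj a b := Disjoint a.val b.val
  symm := ⟨fun _ _ h => Disjoint.symm h⟩
  loopless := ⟨fun a h => by
    have h0 : a.val = ∅ := by simpa using disjoint_self.mp h
    have h2 := a.property
    rw [h0] at h2
    simp at h2⟩


/-!
Read a vertex of `K(5,2)` as an edge of `K₅`. The forts with four vertices are then the five
stars `K₁,₄` and the fifteen `4`-cycles of `K₅`, and an exhaustive check over all `2 ^ 10` vertex
sets shows that every fort contains one of them. A minimal fort therefore is one.
-/

open Finset

section

variable {α : Type*} {G : SimpleGraph α}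

theorem fort_coe_iff [DecidableRel G.Adj] {s : Finset α} :
    Fort G s ↔ s.Nonempty ∧ ∀ v ∉ s, #{w ∈ s | G.Adj v w} ≠ 1 := by
  simp only [Fort, coe_nonempty, mem_coe, ne_eq, card_eq_one_iff_existsUnique, mem_filter]

theorem MinimalFort.ncard_eq_of_forall_exists_fort_subset {k : ℕ}
    (hk : ∀ W, Fort G W → ∃ W' ⊆ W, Fort G W' ∧ W'.ncard = k) {W : Set α}
    (hW : MinimalFort G W) : W.ncard = k := by
  obtain ⟨W', hW'W, hW', rfl⟩ := hk W hW.1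
  rw [hW.2 W' hW' hW'W]

end

instance : DecidableRel petersen.Adj := fun a b => inferInstanceAs (Decidable (Disjoint a.val b.val))

theorem petersen_exists_fort_subset_ncard_four (W : Set {s : Finset (Fin 5) // s.card = 2})
    (hW : Fort petersen W) : ∃ W' ⊆ W, Fort petersen W' ∧ W'.ncard = 4 := by
  have contains_fort_card_four : ∀ s : Finset {s : Finset (Fin 5) // s.card = 2},
      (s.Nonempty ∧ ∀ v ∉ s, #{w ∈ s | petersen.Adj v w} ≠ 1) →
      ∃ t ∈ s.powersetCard 4, t.Nonempty ∧ ∀ v ∉ t, #{w ∈ t | petersen.Adj v w} ≠ 1 := by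
    decide +kernel
  obtain ⟨s, rfl⟩ := W.toFinite.exists_finset_coe
  obtain ⟨t, hts, ht⟩ := contains_fort_card_four s (fort_coe_iff.mp hW)
  rw [mem_powersetCard] at hts
  exact ⟨t, coe_subset.mpr hts.1, fort_coe_iff.mpr ht, by rw [Set.ncard_coe_finset, hts.2]⟩

theorem petersen_wellFailed :
    ∀ W : Set {s : Finset (Fin 5) // s.card = 2}, MinimalFort petersen W → W.ncard = 4 :=
  fun _ hW => hW.ncard_eq_of_forall_exists_fort_subset petersen_exists_fort_subset_ncard_four
end
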